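/- arXiv:2505.03072 — 2 statements merged into one kernel-verified Lean document; each statement's English description precedes it below -/
import Mathlib

section
/- The vector discrete Gaussian mechanism satisfies zCDP at the level of output distributions: Let n ≥ 1, ρ > 0, Δ ≥ 0, and let a, a' ∈ ℤⁿ satisfy ‖a − a'‖₂ ≤ Δ (Euclidean norm). Let P be the distribution on ℤⁿ of a + Y and P' the distribution of a' + Y, where Y has n independent coordinates each distributed as N_ℤ(1/(2ρ)). Then for every α ∈ (1, ∞), D_α(P ‖ P') ≤ Δ²·ρ·α. -/
open scoped ENNReal

/-- Rényi divergence of order `α` between two (sub)probability mass functions. -/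
noncomputable def renyiDiv {X : Type*} (α : ℝ) (P Q : X → ℝ≥0∞) : EReal :=
  (((α - 1)⁻¹ : ℝ) : EReal) * ENNReal.log (∑' x, P x ^ α * Q x ^ (1 - α))

/-- The discrete Gaussian mass function `N_ℤ(v)` with variance parameter `v = σ²`. -/
noncomputable def discreteGaussian (v : ℝ) (x : ℤ) : ℝ≥0∞ :=
  ENNReal.ofReal
    (Real.exp (-(x : ℝ) ^ 2 / (2 * v)) / ∑' y : ℤ, Real.exp (-(y : ℝ) ^ 2 / (2 * v)))

/-!
The Rényi sum `∑ P^α Q^(1-α)` factorises over coordinates. In one coordinate, completing the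
square `α (x - a)² + (1 - α) (x - a')² = (x - c)² - α (α - 1) (a - a')²` with
`c = α a + (1 - α) a'` turns it into `exp (α (α - 1) (a - a')² / (2v))` times the ratio of the
shifted Gaussian sum `∑ₙ exp (-(n - c)² / (2v))` to the centred one. That ratio is at most `1`:
by Poisson summation the shifted sum is `√(2πv) ∑ₖ exp (-2π² v k²) e^{2πikc}`, and the triangle
inequality removes the phases `e^{2πikc}`, leaving the centred sum.
-/

open Real

lemma summable_exp_neg_mul_int_sq_add {T : ℝ} (hT : 0 < T) (S : ℝ) :
    Summable fun n : ℤ => rexp (-π * T * n ^ 2 + 2 * π * S * n) := by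
  refine ((summable_jacobiTheta₂_term_iff (-S * Complex.I) (T * Complex.I)).mpr
    (by simpa using hT)).norm.congr fun n => ?_
  simp only [norm_jacobiTheta₂_term, Complex.mul_im, Complex.neg_re, Complex.neg_im, Complex.ofReal_re,
    Complex.ofReal_im, Complex.I_re, Complex.I_im, mul_one, mul_zero, add_zero, exp_eq_exp]
  ring

lemma summable_exp_neg_int_sub_sq_div {v : ℝ} (hv : 0 < v) (c : ℝ) :
    Summable fun n : ℤ => rexp (-(n - c) ^ 2 / (2 * v)) := by
  refine ((summable_exp_neg_mul_int_sq_add (T := (2 * π * v)⁻¹) (by positivity)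
    (c / (2 * π * v))).mul_right (rexp (-c ^ 2 / (2 * v)))).congr fun n => ?_
  rw [← exp_add]
  congr 1
  field_simp
  ring

lemma tsum_exp_neg_div_int_sub_sq_le {a : ℝ} (ha : 0 < a) (c : ℝ) :
    ∑' n : ℤ, rexp (-π / a * (n - c) ^ 2) ≤ ∑' n : ℤ, rexp (-π / a * n ^ 2) := by
  have hpoisson := Complex.tsum_exp_neg_quadratic (a := a) (by simpa) (Complex.I * c)
  have hnorm : ∀ n : ℤ,
      ‖Complex.exp (-π * a * n ^ 2 + 2 * π * (Complex.I * c) * n)‖ = rexp (-π * a * n ^ 2) := by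
    intro n
    rw [Complex.norm_exp]
    congr 1
    simp only [Complex.add_re, Complex.mul_re, Complex.I_re, Complex.I_im]
    norm_cast
    simp
  have hshift : (∑' n : ℤ, Complex.exp (-π / a * (n + Complex.I * (Complex.I * c)) ^ 2))
      = ((∑' n : ℤ, rexp (-π / a * (n - c) ^ 2) : ℝ) : ℂ) := by
    rw [Complex.ofReal_tsum]
    refine tsum_congr fun n => ?_
    rw [Complex.ofReal_exp, ← mul_assoc, Complex.I_mul_I]
    push_cast
    ring_nf
  have hk : (1 / (a : ℂ) ^ (1 / 2 : ℂ)) = ((1 / a ^ (1 / 2 : ℝ) : ℝ) : ℂ) := by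
    rw [Complex.ofReal_div, Complex.ofReal_cpow ha.le]
    norm_num
  rw [hshift, hk, ← Complex.ofReal_mul] at hpoisson
  have hk_pos : 0 < 1 / a ^ (1 / 2 : ℝ) := by positivity
  refine le_of_mul_le_mul_left ?_ hk_pos
  calc 1 / a ^ (1 / 2 : ℝ) * ∑' n : ℤ, rexp (-π / a * (n - c) ^ 2)
      = ‖∑' n : ℤ, Complex.exp (-π * a * n ^ 2 + 2 * π * (Complex.I * c) * n)‖ := by
        rw [hpoisson, Complex.norm_real, norm_of_nonneg
          (mul_nonneg hk_pos.le (tsum_nonneg fun n => (exp_pos _).le))]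
    _ ≤ ∑' n : ℤ, rexp (-π * a * n ^ 2) := by
        refine (norm_tsum_le_tsum_norm ?_).trans_eq (tsum_congr hnorm)
        exact (summable_exp_neg_mul_int_sq_add ha 0).congr fun n => by rw [hnorm]; simp
    _ = 1 / a ^ (1 / 2 : ℝ) * ∑' n : ℤ, rexp (-π / a * n ^ 2) := tsum_exp_neg_mul_int_sq ha

lemma tsum_exp_neg_int_sub_sq_div_le {v : ℝ} (hv : 0 < v) (c : ℝ) :
    ∑' n : ℤ, rexp (-(n - c) ^ 2 / (2 * v)) ≤ ∑' n : ℤ, rexp (-(n : ℝ) ^ 2 / (2 * v)) := by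
  have hform : ∀ x : ℝ, -x ^ 2 / (2 * v) = -π / (2 * π * v) * x ^ 2 := fun x => by
    field_simp
  simp_rw [hform]
  exact tsum_exp_neg_div_int_sub_sq_le (by positivity) c

lemma tsum_exp_neg_int_sq_div_pos {v : ℝ} (hv : 0 < v) :
    0 < ∑' n : ℤ, rexp (-(n : ℝ) ^ 2 / (2 * v)) :=
  (summable_exp_neg_int_sub_sq_div hv 0).tsum_pos (fun _ => (exp_pos _).le) 0 (exp_pos _)
    |>.trans_eq (by simp)

lemma discreteGaussian_eq_ofReal_exp {v : ℝ} (hv : 0 < v) (x : ℤ) :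
    discreteGaussian v x = ENNReal.ofReal (rexp (-(x : ℝ) ^ 2 / (2 * v)
      - log (∑' y : ℤ, rexp (-(y : ℝ) ^ 2 / (2 * v))))) := by
  rw [discreteGaussian, exp_sub, exp_log (tsum_exp_neg_int_sq_div_pos hv)]

lemma discreteGaussian_rpow_mul_rpow {v : ℝ} (hv : 0 < v) (α : ℝ) (a a' x : ℤ) :
    discreteGaussian v (x - a) ^ α * discreteGaussian v (x - a') ^ (1 - α)
      = ENNReal.ofReal (rexp (α * (α - 1) * ((a - a' : ℤ) : ℝ) ^ 2 / (2 * v))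
          * (rexp (-(x - (α * a + (1 - α) * a')) ^ 2 / (2 * v))
            / ∑' y : ℤ, rexp (-(y : ℝ) ^ 2 / (2 * v)))) := by
  rw [discreteGaussian_eq_ofReal_exp hv, discreteGaussian_eq_ofReal_exp hv,
    ENNReal.ofReal_rpow_of_pos (exp_pos _), ENNReal.ofReal_rpow_of_pos (exp_pos _),
    ← ENNReal.ofReal_mul (by positivity), ← exp_mul, ← exp_mul, ← exp_add]
  conv_rhs => rw [← exp_log (tsum_exp_neg_int_sq_div_pos hv), ← exp_sub, ← exp_add]
  congr 2
  push_cast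
  field_simp
  ring

lemma tsum_discreteGaussian_rpow_mul_rpow_le {v : ℝ} (hv : 0 < v) (α : ℝ) (a a' : ℤ) :
    ∑' x : ℤ, discreteGaussian v (x - a) ^ α * discreteGaussian v (x - a') ^ (1 - α)
      ≤ ENNReal.ofReal (rexp (α * (α - 1) * ((a - a' : ℤ) : ℝ) ^ 2 / (2 * v))) := by
  set c : ℝ := α * a + (1 - α) * a'
  have hZ := tsum_exp_neg_int_sq_div_pos hv
  simp_rw [discreteGaussian_rpow_mul_rpow hv]
  rw [← ENNReal.ofReal_tsum_of_nonneg (fun x => by positivity)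
    (((summable_exp_neg_int_sub_sq_div hv c).div_const _).mul_left _), tsum_mul_left, tsum_div_const]
  refine ENNReal.ofReal_le_ofReal (mul_le_of_le_one_right (exp_pos _).le ?_)
  exact div_le_one_of_le₀ (tsum_exp_neg_int_sub_sq_div_le hv c) hZ.le

lemma ENNReal.tsum_fin_pi_prod {X : Type*} :
    ∀ {n : ℕ} (F : Fin n → X → ℝ≥0∞), ∑' w : Fin n → X, ∏ i, F i (w i) = ∏ i, ∑' x, F i x
  | 0, F => by simp
  | n + 1, F => by
    rw [← (Fin.consEquiv fun _ => X).tsum_eq, ENNReal.tsum_prod', Fin.prod_univ_succ,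
      ← ENNReal.tsum_fin_pi_prod fun i => F i.succ, ← ENNReal.tsum_mul_right]
    simp [Fin.consEquiv, Fin.prod_univ_succ, ENNReal.tsum_mul_left]

lemma tsum_prod_discreteGaussian_rpow_mul_rpow_le {v : ℝ} (hv : 0 < v) (α : ℝ) {n : ℕ}
    (a a' : Fin n → ℤ) :
    ∑' w : Fin n → ℤ, (∏ i, discreteGaussian v (w i - a i)) ^ α
        * (∏ i, discreteGaussian v (w i - a' i)) ^ (1 - α)
      ≤ ENNReal.ofReal (rexp (α * (α - 1) * (∑ i, ((a i - a' i : ℤ) : ℝ) ^ 2) / (2 * v))) := by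
  have hfin : ∀ x, discreteGaussian v x ≠ ⊤ := fun _ => ENNReal.ofReal_ne_top
  simp_rw [← ENNReal.prod_rpow_of_ne_top (fun i _ => hfin _), ← Finset.prod_mul_distrib]
  rw [ENNReal.tsum_fin_pi_prod fun i x =>
      discreteGaussian v (x - a i) ^ α * discreteGaussian v (x - a' i) ^ (1 - α),
    Finset.mul_sum, Finset.sum_div, exp_sum,
    ENNReal.ofReal_prod_of_nonneg fun _ _ => (exp_pos _).le]
  exact Finset.prod_le_prod' fun i _ => tsum_discreteGaussian_rpow_mul_rpow_le hv α (a i) (a' i)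

lemma renyiDiv_le_of_tsum_le {X : Type*} {α r : ℝ} (hα : 1 < α) {P Q : X → ℝ≥0∞}
    (h : ∑' x, P x ^ α * Q x ^ (1 - α) ≤ ENNReal.ofReal (rexp ((α - 1) * r))) :
    renyiDiv α P Q ≤ r := by
  have hα' : 0 < α - 1 := sub_pos.mpr hα
  calc renyiDiv α P Q ≤ (((α - 1)⁻¹ : ℝ) : EReal) * (((α - 1) * r : ℝ) : EReal) := by
        refine mul_le_mul_of_nonneg_left ?_ (by exact_mod_cast (inv_pos.mpr hα').le)
        simpa [ENNReal.log_ofReal_of_pos (exp_pos _)] using ENNReal.log_monotone h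
    _ = r := by
        rw [← EReal.coe_mul, inv_mul_cancel_left₀ hα'.ne']

theorem renyiDiv_vector_discreteGaussian_general
    (n : ℕ) (ρ : ℝ) (hρ : 0 < ρ) (Δ : ℝ)
    (a a' : Fin n → ℤ)
    (hsens : Real.sqrt (∑ i : Fin n, ((a i - a' i : ℤ) : ℝ) ^ 2) ≤ Δ) :
    ∀ α : ℝ, 1 < α →
      renyiDiv α
        (fun w : Fin n → ℤ => ∏ i : Fin n, discreteGaussian (1 / (2 * ρ)) (w i - a i))
        (fun w : Fin n → ℤ => ∏ i : Fin n, discreteGaussian (1 / (2 * ρ)) (w i - a' i))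
        ≤ ((Δ ^ 2 * ρ * α : ℝ) : EReal) := by
  intro α hα
  have hdist : ∑ i, ((a i - a' i : ℤ) : ℝ) ^ 2 ≤ Δ ^ 2 := (Real.sqrt_le_iff.mp hsens).2
  refine renyiDiv_le_of_tsum_le hα <|
    (tsum_prod_discreteGaussian_rpow_mul_rpow_le (by positivity) α a a').trans <|
    ENNReal.ofReal_le_ofReal <| exp_le_exp.mpr ?_
  have hscale : α * (α - 1) * (∑ i, ((a i - a' i : ℤ) : ℝ) ^ 2) / (2 * (1 / (2 * ρ)))
      = (α - 1) * ((∑ i, ((a i - a' i : ℤ) : ℝ) ^ 2) * ρ * α) := by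
    field_simp
  rw [hscale]
  gcongr

/-- The vector discrete Gaussian mechanism satisfies zCDP at the level of output
distributions: if `‖a - a'‖₂ ≤ Δ` then the product of `n` independent `N_ℤ(1/(2ρ))`
noises centered at `a` and `a'` respectively have Rényi divergence at most `Δ²ρα`. -/
theorem renyiDiv_vector_discreteGaussian
    (n : ℕ) (hn : 1 ≤ n) (ρ : ℝ) (hρ : 0 < ρ) (Δ : ℝ) (hΔ : 0 ≤ Δ)
    (a a' : Fin n → ℤ)
    (hsens : Real.sqrt (∑ i : Fin n, ((a i - a' i : ℤ) : ℝ) ^ 2) ≤ Δ) :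
    ∀ α : ℝ, 1 < α →
      renyiDiv α
        (fun w : Fin n → ℤ => ∏ i : Fin n, discreteGaussian (1 / (2 * ρ)) (w i - a i))
        (fun w : Fin n → ℤ => ∏ i : Fin n, discreteGaussian (1 / (2 * ρ)) (w i - a' i))
        ≤ ((Δ ^ 2 * ρ * α : ℝ) : EReal) :=
  renyiDiv_vector_discreteGaussian_general n ρ hρ Δ a a' hsens
end

section
/- Theorem 1 (SafeTab-H satisfies ρ_total-zCDP), stated for the concrete noisy-count mechanism: Let R be a type of records and let ω ≥ 1. For each level i ∈ {1, …, ω}, let 𝒫ᵢ be a finite set of population groups, gᵢ : R → Finset 𝒫ᵢ a map with |gᵢ(r)| ≤ sᵢ for all r, 𝒯ᵢ ⊆ 𝒫ᵢ a set of eligible groups, and for each table class t ∈ {HT, T} a family of category maps (f_{i,P}^t : R → K_{i,P}^t)_{P∈𝒯ᵢ} into finite types, with stacked count vectors Vᵢ^t(D); let ρᵢ^HT, ρᵢ^T > 0. Define the mechanism M(D) that outputs, jointly over all i and t, the vectors Vᵢ^t(D) + Yᵢ^t, where all noise vectors Yᵢ^t are independent and each coordinate of Yᵢ^t is distributed as N_ℤ(sᵢ/(2ρᵢ^t)).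 Let ρ_total = Σ_{i=1}^{ω} (ρᵢ^HT + ρᵢ^T). Then for all finite multisets D, D' over R whose symmetric difference is 1 and all α ∈ (1, ∞), D_α(M(D) ‖ M(D')) ≤ ρ_total·α; i.e., M satisfies ρ_total-zCDP. -/
/-!
Each released vector is a discrete Gaussian centred at a count vector, and all the noise is
independent, so the Hellinger integral `∑ P^α Q^(1-α)` of the joint output distributions on
neighbouring databases factors into one-dimensional integrals, one per coordinate.

For one coordinate, completing the square turns the integral into
`exp (α (α - 1) Δ² / (2 v))` times a shifted Gaussian sum `∑ₙ exp (-(n - μ)² / (2 v))`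
divided by the unshifted one. Poisson summation shows that shifting never increases this sum,
so each coordinate contributes at most `exp (α (α - 1) Δ² / (2 v))`.

Adding or removing one record `r` changes the count vector of level `i` by the indicator of the
pairs `(P, f_P r)` with `P ∈ 𝒯ᵢ ∩ gᵢ r`, so its squared `ℓ²` norm is at most `sᵢ`. With
`v = sᵢ / (2 ρ)` every level and table class contributes at most `exp (α (α - 1) ρ)`, and
taking `log` and dividing by `α - 1` gives the bound `ρ_total α`.
-/

open scoped ENNReal

/-- The stacked count vector for one population-group level. -/
def stackedCount {R PG : Type*} [DecidableEq PG] {K : PG → Type*}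
    [∀ P, DecidableEq (K P)] (T : Finset PG) (g : R → Finset PG)
    (f : (P : PG) → R → K P) (D : Multiset R) :
    ((P : {P : PG // P ∈ T}) × K P.val) → ℤ :=
  fun c => ((D.filter fun r => c.1.val ∈ g r ∧ f c.1.val r = c.2).card : ℤ)

open scoped Real
open Finset HurwitzZeta

universe u

namespace HurwitzZeta

lemma cosKernel_le_cosKernel_zero (a : UnitAddCircle) {x : ℝ} (hx : 0 < x) :
    cosKernel a x ≤ cosKernel 0 x := by
  induction a using QuotientAddGroup.induction_on with | H a =>
  have hzero : HasSum (fun n : ℤ ↦ Real.exp (-π * n ^ 2 * x)) (cosKernel 0 x) := by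
    simpa [← evenKernel_eq_cosKernel_of_zero] using hasSum_int_evenKernel 0 hx
  have hnorm : ‖(cosKernel a x : ℂ)‖ ≤ cosKernel 0 x :=
    (hasSum_int_cosKernel a hx).norm_le_of_bounded hzero fun n ↦ by
      simp [Complex.norm_exp, ← Complex.ofReal_intCast, -Complex.ofReal_pow]
  exact (le_abs_self _).trans (by simpa using hnorm)

lemma evenKernel_le_evenKernel_zero (a : UnitAddCircle) {x : ℝ} (hx : 0 < x) :
    evenKernel a x ≤ evenKernel 0 x := by
  rw [evenKernel_functional_equation, evenKernel_functional_equation]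
  gcongr
  exact cosKernel_le_cosKernel_zero a (one_div_pos.mpr hx)

end HurwitzZeta

namespace ENNReal

lemma tsum_pi_fin_prod : ∀ {n : ℕ} {X : Fin n → Type u} (f : ∀ i, X i → ℝ≥0∞),
    ∑' w : ∀ i, X i, ∏ i, f i (w i) = ∏ i, ∑' x, f i x
  | 0, _, _ => by simp [tsum_fintype]
  | n + 1, X, f => by
    rw [← (Fin.consEquiv X).tsum_eq, ENNReal.tsum_prod', Fin.prod_univ_succ,
      ← tsum_pi_fin_prod fun i ↦ f i.succ, ← ENNReal.tsum_mul_right]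
    simp [Fin.consEquiv, Fin.prod_univ_succ, ENNReal.tsum_mul_left]

lemma tsum_pi_prod {ι : Type*} [Fintype ι] {X : ι → Type u} (f : ∀ i, X i → ℝ≥0∞) :
    ∑' w : ∀ i, X i, ∏ i, f i (w i) = ∏ i, ∑' x, f i x := by
  let e := (Fintype.equivFin ι).symm
  rw [← (Equiv.piCongrLeft X e).tsum_eq, ← e.prod_comp, ← tsum_pi_fin_prod]
  refine tsum_congr fun w ↦ (e.prod_comp _).symm.trans ?_
  simp [Equiv.piCongrLeft_apply_apply]

end ENNReal

noncomputable def hellingerIntegral {X : Type*} (α : ℝ) (P Q : X → ℝ≥0∞) : ℝ≥0∞ :=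
  ∑' x, P x ^ α * Q x ^ (1 - α)

section hellingerIntegral

variable {α : ℝ}

lemma renyiDiv_le_of_hellingerIntegral_le {X : Type*} {P Q : X → ℝ≥0∞} (hα : 1 < α) {t : ℝ}
    (h : hellingerIntegral α P Q ≤ ENNReal.ofReal (Real.exp ((α - 1) * t))) :
    renyiDiv α P Q ≤ t := by
  have hα' : 0 < α - 1 := sub_pos.mpr hα
  have hlog : ENNReal.log (hellingerIntegral α P Q) ≤ (((α - 1) * t : ℝ) : EReal) := by
    simpa [ENNReal.log_ofReal_of_pos (Real.exp_pos _)] using ENNReal.log_monotone h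
  calc renyiDiv α P Q ≤ (((α - 1)⁻¹ : ℝ) : EReal) * (((α - 1) * t : ℝ) : EReal) :=
        mul_le_mul_of_nonneg_left hlog (by exact_mod_cast (inv_pos.mpr hα').le)
    _ = t := by rw [← EReal.coe_mul, inv_mul_cancel_left₀ hα'.ne']

lemma hellingerIntegral_prod {X Y : Type*} {P₁ Q₁ : X → ℝ≥0∞} {P₂ Q₂ : Y → ℝ≥0∞}
    (hP₁ : ∀ x, P₁ x ≠ ⊤) (hQ₁ : ∀ x, Q₁ x ≠ ⊤) (hP₂ : ∀ y, P₂ y ≠ ⊤) (hQ₂ : ∀ y, Q₂ y ≠ ⊤) :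
    hellingerIntegral α (fun p : X × Y ↦ P₁ p.1 * P₂ p.2) (fun p ↦ Q₁ p.1 * Q₂ p.2)
      = hellingerIntegral α P₁ Q₁ * hellingerIntegral α P₂ Q₂ := by
  simp only [hellingerIntegral]
  rw [ENNReal.tsum_prod', ← ENNReal.tsum_mul_right]
  refine tsum_congr fun x ↦ ?_
  rw [← ENNReal.tsum_mul_left]
  refine tsum_congr fun y ↦ ?_
  rw [ENNReal.mul_rpow_of_ne_top (hP₁ _) (hP₂ _), ENNReal.mul_rpow_of_ne_top (hQ₁ _) (hQ₂ _)]
  ring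

lemma hellingerIntegral_pi {ι : Type*} [Fintype ι] {X : ι → Type u} {P Q : ∀ i, X i → ℝ≥0∞}
    (hP : ∀ i x, P i x ≠ ⊤) (hQ : ∀ i x, Q i x ≠ ⊤) :
    hellingerIntegral α (fun w : ∀ i, X i ↦ ∏ i, P i (w i)) (fun w ↦ ∏ i, Q i (w i))
      = ∏ i, hellingerIntegral α (P i) (Q i) := by
  simp only [hellingerIntegral, ← ENNReal.prod_rpow_of_ne_top (fun i _ ↦ hP i _),
    ← ENNReal.prod_rpow_of_ne_top (fun i _ ↦ hQ i _), ← Finset.prod_mul_distrib]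
  exact ENNReal.tsum_pi_prod fun i x ↦ P i x ^ α * Q i x ^ (1 - α)

end hellingerIntegral

section discreteGaussian

variable {v : ℝ} {α : ℝ}

lemma hasSum_exp_neg_sq_sub (hv : 0 < v) (μ : ℝ) :
    HasSum (fun n : ℤ ↦ Real.exp (-((n : ℝ) - μ) ^ 2 / (2 * v)))
      (evenKernel (-μ : ℝ) (2 * π * v)⁻¹) := by
  convert hasSum_int_evenKernel (-μ) (by positivity : 0 < (2 * π * v)⁻¹) using 3 with n
  field_simp
  ring

lemma tsum_exp_neg_sq_sub_le (hv : 0 < v) (μ : ℝ) :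
    ∑' n : ℤ, Real.exp (-((n : ℝ) - μ) ^ 2 / (2 * v))
      ≤ ∑' n : ℤ, Real.exp (-(n : ℝ) ^ 2 / (2 * v)) := by
  rw [(hasSum_exp_neg_sq_sub hv μ).tsum_eq, (by simpa using hasSum_exp_neg_sq_sub hv 0 :
    HasSum (fun n : ℤ ↦ Real.exp (-(n : ℝ) ^ 2 / (2 * v))) (evenKernel 0 (2 * π * v)⁻¹)).tsum_eq]
  exact evenKernel_le_evenKernel_zero _ (by positivity)

lemma tsum_exp_neg_sq_pos (hv : 0 < v) : 0 < ∑' n : ℤ, Real.exp (-(n : ℝ) ^ 2 / (2 * v)) := by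
  simpa using (hasSum_exp_neg_sq_sub hv 0).summable.tsum_pos (fun _ ↦ (Real.exp_pos _).le) 0
    (Real.exp_pos _)

lemma discreteGaussian_ne_top (v : ℝ) (x : ℤ) : discreteGaussian v x ≠ ⊤ := ENNReal.ofReal_ne_top

lemma discreteGaussian_zero : discreteGaussian 0 = 0 := by
  funext x
  have h : ¬ Summable fun _ : ℤ ↦ (1 : ℝ) := by simp [summable_const_iff]
  simp [discreteGaussian, tsum_eq_zero_of_not_summable h]

/-- At `v = 0` both sides degenerate: `discreteGaussian 0 = 0` and the right side is `1`. -/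
lemma hellingerIntegral_discreteGaussian_le (hv : 0 ≤ v) (a b : ℤ) (hα : 1 < α) :
    hellingerIntegral α (fun z ↦ discreteGaussian v (z - a)) (fun z ↦ discreteGaussian v (z - b))
      ≤ ENNReal.ofReal (Real.exp (α * (α - 1) * (((a : ℝ) - b) ^ 2 / (2 * v)))) := by
  rcases hv.eq_or_lt with rfl | hv
  · simp [hellingerIntegral, discreteGaussian_zero, ENNReal.zero_rpow_of_pos (by linarith : 0 < α)]
  set S := ∑' n : ℤ, Real.exp (-(n : ℝ) ^ 2 / (2 * v))
  have hS : 0 < S := tsum_exp_neg_sq_pos hv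
  set K := Real.exp (α * (α - 1) * (((a : ℝ) - b) ^ 2 / (2 * v)))
  set μ : ℝ := b + α * (a - b)
  -- completing the square: `α (z - a)² + (1 - α) (z - b)² = (z - μ)² - α (α - 1) (a - b)²`
  have hterm (z : ℤ) : discreteGaussian v (z - a) ^ α * discreteGaussian v (z - b) ^ (1 - α)
      = ENNReal.ofReal (K * Real.exp (-((z : ℝ) - μ) ^ 2 / (2 * v)) / S) := by
    rw [discreteGaussian, discreteGaussian, ENNReal.ofReal_rpow_of_pos (by positivity),
      ENNReal.ofReal_rpow_of_pos (by positivity), ← ENNReal.ofReal_mul (by positivity),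
      Real.div_rpow (by positivity) hS.le, Real.div_rpow (by positivity) hS.le,
      div_mul_div_comm, ← Real.rpow_add hS, add_sub_cancel, Real.rpow_one,
      ← Real.exp_mul, ← Real.exp_mul, ← Real.exp_add, ← Real.exp_add]
    congr 3
    push_cast
    field_simp
    ring
  have hsum : ∑' z : ℤ, K * Real.exp (-((z : ℝ) - μ) ^ 2 / (2 * v)) / S ≤ K := by
    rw [tsum_div_const, tsum_mul_left, div_le_iff₀ hS]
    exact mul_le_mul_of_nonneg_left (tsum_exp_neg_sq_sub_le hv μ) (Real.exp_nonneg _)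
  rw [hellingerIntegral, tsum_congr hterm, ← ENNReal.ofReal_tsum_of_nonneg (fun _ ↦ by positivity)
    (((hasSum_exp_neg_sq_sub hv μ).summable.mul_left K).div_const S)]
  exact ENNReal.ofReal_le_ofReal hsum

noncomputable def discreteGaussianPi {A : Type*} [Fintype A] (v : ℝ) (μ w : A → ℤ) : ℝ≥0∞ :=
  ∏ c, discreteGaussian v (w c - μ c)

variable {A : Type*} [Fintype A]

lemma discreteGaussianPi_ne_top (v : ℝ) (μ w : A → ℤ) : discreteGaussianPi v μ w ≠ ⊤ :=
  ENNReal.prod_ne_top fun _ _ ↦ discreteGaussian_ne_top v _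

lemma hellingerIntegral_discreteGaussianPi_le (hv : 0 ≤ v) (a b : A → ℤ) (hα : 1 < α) :
    hellingerIntegral α (discreteGaussianPi v a) (discreteGaussianPi v b)
      ≤ ENNReal.ofReal (Real.exp (α * (α - 1) * ∑ c, ((a c : ℝ) - b c) ^ 2 / (2 * v))) := by
  refine (hellingerIntegral_pi (P := fun c z ↦ discreteGaussian v (z - a c))
    (Q := fun c z ↦ discreteGaussian v (z - b c)) (fun _ _ ↦ discreteGaussian_ne_top _ _)
    (fun _ _ ↦ discreteGaussian_ne_top _ _)).trans_le ?_
  rw [Finset.mul_sum, Real.exp_sum, ENNReal.ofReal_prod_of_nonneg fun _ _ ↦ (Real.exp_pos _).le]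
  exact prod_le_prod' fun c _ ↦ hellingerIntegral_discreteGaussian_le hv (a c) (b c) hα

lemma hellingerIntegral_discreteGaussianPi_le_of_sum_sq_le {s ρ : ℝ} (hρ : 0 < ρ) {a b : A → ℤ}
    (hs : ∑ c, ((a c : ℝ) - b c) ^ 2 ≤ s) (hα : 1 < α) :
    hellingerIntegral α (discreteGaussianPi (s / (2 * ρ)) a) (discreteGaussianPi (s / (2 * ρ)) b)
      ≤ ENNReal.ofReal (Real.exp (α * (α - 1) * ρ)) := by
  have hs₀ : 0 ≤ s := (sum_nonneg fun c _ ↦ sq_nonneg _).trans hs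
  refine (hellingerIntegral_discreteGaussianPi_le (by positivity) a b hα).trans
    (ENNReal.ofReal_le_ofReal (Real.exp_le_exp.mpr (mul_le_mul_of_nonneg_left ?_ (by nlinarith))))
  rw [← sum_div, show 2 * (s / (2 * ρ)) = s / ρ by field_simp]
  rcases hs₀.eq_or_lt with rfl | hs₀
  · simpa using hρ.le
  calc (∑ c, ((a c : ℝ) - b c) ^ 2) / (s / ρ) ≤ s / (s / ρ) := by gcongr
    _ = ρ := by field_simp

lemma hellingerIntegral_discreteGaussianPi_prod_le {B : Type*} [Fintype B] {s ρ₁ ρ₂ : ℝ}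
    (hρ₁ : 0 < ρ₁) (hρ₂ : 0 < ρ₂) {a a' : A → ℤ} {b b' : B → ℤ}
    (ha : ∑ c, ((a c : ℝ) - a' c) ^ 2 ≤ s) (hb : ∑ c, ((b c : ℝ) - b' c) ^ 2 ≤ s) (hα : 1 < α) :
    hellingerIntegral α
        (fun p : (A → ℤ) × (B → ℤ) ↦
          discreteGaussianPi (s / (2 * ρ₁)) a p.1 * discreteGaussianPi (s / (2 * ρ₂)) b p.2)
        (fun p ↦
          discreteGaussianPi (s / (2 * ρ₁)) a' p.1 * discreteGaussianPi (s / (2 * ρ₂)) b' p.2)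
      ≤ ENNReal.ofReal (Real.exp (α * (α - 1) * (ρ₁ + ρ₂))) := by
  rw [hellingerIntegral_prod (discreteGaussianPi_ne_top _ _) (discreteGaussianPi_ne_top _ _)
    (discreteGaussianPi_ne_top _ _) (discreteGaussianPi_ne_top _ _), mul_add, Real.exp_add,
    ENNReal.ofReal_mul (Real.exp_pos _).le]
  exact mul_le_mul' (hellingerIntegral_discreteGaussianPi_le_of_sum_sq_le hρ₁ ha hα)
    (hellingerIntegral_discreteGaussianPi_le_of_sum_sq_le hρ₂ hb hα)

end discreteGaussian

lemma Multiset.eq_add_singleton_of_card_sub_add_sub_eq_one {R : Type*} [DecidableEq R]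
    {D D' : Multiset R} (h : card (D - D' + (D' - D)) = 1) :
    (∃ r, D = D' + {r}) ∨ (∃ r, D' = D + {r}) := by
  rw [card_add] at h
  rcases Nat.add_eq_one_iff.mp h with ⟨h₁, h₂⟩ | ⟨h₁, h₂⟩
  · obtain ⟨r, hr⟩ := card_eq_one.mp h₂
    refine .inr ⟨r, ?_⟩
    rw [← hr, add_tsub_cancel_of_le (tsub_eq_zero_iff_le.mp (card_eq_zero.mp h₁))]
  · obtain ⟨r, hr⟩ := card_eq_one.mp h₁
    refine .inl ⟨r, ?_⟩
    rw [← hr, add_tsub_cancel_of_le (tsub_eq_zero_iff_le.mp (card_eq_zero.mp h₂))]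

section stackedCount

variable {R PG : Type*} [DecidableEq PG] {K : PG → Type*} [∀ P, DecidableEq (K P)]
  (T : Finset PG) (g : R → Finset PG) (f : (P : PG) → R → K P)

lemma stackedCount_add (D₁ D₂ : Multiset R) :
    stackedCount T g f (D₁ + D₂) = stackedCount T g f D₁ + stackedCount T g f D₂ := by
  funext c
  simp [stackedCount, Multiset.filter_add]

lemma stackedCount_singleton (r : R) (c : (P : {P : PG // P ∈ T}) × K P.val) :
    stackedCount T g f {r} c = if c.1.val ∈ g r ∧ f c.1.val r = c.2 then 1 else 0 := by
  simp [stackedCount, Multiset.filter_singleton, apply_ite]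

variable [∀ P, Fintype (K P)]

lemma sum_sq_stackedCount_singleton (r : R) :
    ∑ c, stackedCount T g f {r} c ^ 2 = #(T ∩ g r) := by
  have hfiber (P : {P // P ∈ T}) :
      ∑ k, stackedCount T g f {r} ⟨P, k⟩ ^ 2 = if P.val ∈ g r then 1 else 0 := by
    by_cases hP : P.val ∈ g r <;> simp [stackedCount_singleton, hP]
  rw [Fintype.sum_sigma, Fintype.sum_congr _ _ hfiber,
    Finset.sum_coe_sort T fun P ↦ if P ∈ g r then (1 : ℤ) else 0, sum_boole, filter_mem_eq_inter]

lemma sum_sq_sub_stackedCount_le [DecidableEq R] {s : ℕ} (hs : ∀ r, #(g r) ≤ s)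
    {D D' : Multiset R} (h : Multiset.card (D - D' + (D' - D)) = 1) :
    ∑ c, ((stackedCount T g f D c : ℝ) - stackedCount T g f D' c) ^ 2 ≤ s := by
  obtain ⟨r, hr⟩ : ∃ r, ∑ c, ((stackedCount T g f D c : ℝ) - stackedCount T g f D' c) ^ 2
      = ∑ c, (stackedCount T g f {r} c : ℝ) ^ 2 := by
    rcases Multiset.eq_add_singleton_of_card_sub_add_sub_eq_one h with ⟨r, rfl⟩ | ⟨r, rfl⟩ <;>
      exact ⟨r, sum_congr rfl fun c _ ↦ by
        simp only [stackedCount_add, Pi.add_apply]; push_cast; ring⟩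
  have hcard : ∑ c, stackedCount T g f {r} c ^ 2 ≤ s := by
    rw [sum_sq_stackedCount_singleton]
    exact_mod_cast (card_le_card inter_subset_right).trans (hs r)
  rw [hr]
  exact_mod_cast hcard

end stackedCount

theorem safetabH_zCDP_general {R : Type*} [DecidableEq R] (ω : ℕ)
    {PG : Fin ω → Type*} [∀ i, DecidableEq (PG i)]
    {KHT : (i : Fin ω) → PG i → Type*} {KT : (i : Fin ω) → PG i → Type*}
    [∀ i P, Fintype (KHT i P)] [∀ i P, DecidableEq (KHT i P)]
    [∀ i P, Fintype (KT i P)] [∀ i P, DecidableEq (KT i P)]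
    (T : (i : Fin ω) → Finset (PG i)) (g : (i : Fin ω) → R → Finset (PG i))
    (s : Fin ω → ℕ) (hs : ∀ i, ∀ r : R, (g i r).card ≤ s i)
    (fHT : (i : Fin ω) → (P : PG i) → R → KHT i P)
    (fT : (i : Fin ω) → (P : PG i) → R → KT i P)
    (ρHT ρT : Fin ω → ℝ) (hρHT : ∀ i, 0 < ρHT i) (hρT : ∀ i, 0 < ρT i)
    (M : Multiset R →
      ((i : Fin ω) →
        ((((P : {P : PG i // P ∈ T i}) × KHT i P.val) → ℤ) ×
          (((P : {P : PG i // P ∈ T i}) × KT i P.val) → ℤ))) → ℝ≥0∞)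
    (hM : ∀ D w, M D w = ∏ i : Fin ω,
      ((∏ c, discreteGaussian ((s i : ℝ) / (2 * ρHT i))
          ((w i).1 c - stackedCount (T i) (g i) (fHT i) D c)) *
        (∏ c, discreteGaussian ((s i : ℝ) / (2 * ρT i))
          ((w i).2 c - stackedCount (T i) (g i) (fT i) D c)))) :
    ∀ (D D' : Multiset R), Multiset.card (D - D' + (D' - D)) = 1 →
      ∀ α : ℝ, 1 < α →
        renyiDiv α (M D) (M D') ≤ (((∑ i : Fin ω, (ρHT i + ρT i)) * α : ℝ) : EReal) := by
  intro D D' hD α hα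
  set F := fun D i (p : (_ → ℤ) × (_ → ℤ)) ↦
    discreteGaussianPi ((s i : ℝ) / (2 * ρHT i)) (stackedCount (T i) (g i) (fHT i) D) p.1 *
      discreteGaussianPi ((s i : ℝ) / (2 * ρT i)) (stackedCount (T i) (g i) (fT i) D) p.2
  have hF_ne_top D i p : F D i p ≠ ⊤ :=
    ENNReal.mul_ne_top (discreteGaussianPi_ne_top _ _ _) (discreteGaussianPi_ne_top _ _ _)
  have hMF D : M D = fun w ↦ ∏ i, F D i (w i) := funext (hM D)
  refine renyiDiv_le_of_hellingerIntegral_le hα ?_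
  rw [hMF, hMF, hellingerIntegral_pi (hF_ne_top D) (hF_ne_top D')]
  calc ∏ i, hellingerIntegral α (F D i) (F D' i)
      ≤ ∏ i, ENNReal.ofReal (Real.exp (α * (α - 1) * (ρHT i + ρT i))) :=
        prod_le_prod' fun i _ ↦ hellingerIntegral_discreteGaussianPi_prod_le (hρHT i) (hρT i)
          (sum_sq_sub_stackedCount_le _ _ _ (hs i) hD)
          (sum_sq_sub_stackedCount_le _ _ _ (hs i) hD) hα
    _ = ENNReal.ofReal (Real.exp ((α - 1) * ((∑ i, (ρHT i + ρT i)) * α))) := by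
        rw [← ENNReal.ofReal_prod_of_nonneg fun _ _ ↦ (Real.exp_pos _).le, ← Real.exp_sum,
          ← Finset.mul_sum]
        congr 2
        ring

/-- Theorem 1: SafeTab-H satisfies `ρ_total`-zCDP, for the concrete mechanism that
jointly releases, for every level `i` and table class `t ∈ {HT, T}`, the stacked
count vector plus independent `N_ℤ(sᵢ/(2ρᵢᵗ))` noise on each coordinate. -/
theorem safetabH_zCDP {R : Type*} [DecidableEq R] (ω : ℕ) (hω : 1 ≤ ω)
    {PG : Fin ω → Type*} [∀ i, Fintype (PG i)] [∀ i, DecidableEq (PG i)]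
    {KHT : (i : Fin ω) → PG i → Type*} {KT : (i : Fin ω) → PG i → Type*}
    [∀ i P, Fintype (KHT i P)] [∀ i P, DecidableEq (KHT i P)]
    [∀ i P, Fintype (KT i P)] [∀ i P, DecidableEq (KT i P)]
    (T : (i : Fin ω) → Finset (PG i)) (g : (i : Fin ω) → R → Finset (PG i))
    (s : Fin ω → ℕ) (hs : ∀ i, ∀ r : R, (g i r).card ≤ s i)
    (fHT : (i : Fin ω) → (P : PG i) → R → KHT i P)
    (fT : (i : Fin ω) → (P : PG i) → R → KT i P)
    (ρHT ρT : Fin ω → ℝ) (hρHT : ∀ i, 0 < ρHT i) (hρT : ∀ i, 0 < ρT i)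
    (M : Multiset R →
      ((i : Fin ω) →
        ((((P : {P : PG i // P ∈ T i}) × KHT i P.val) → ℤ) ×
          (((P : {P : PG i // P ∈ T i}) × KT i P.val) → ℤ))) → ℝ≥0∞)
    (hM : ∀ D w, M D w = ∏ i : Fin ω,
      ((∏ c, discreteGaussian ((s i : ℝ) / (2 * ρHT i))
          ((w i).1 c - stackedCount (T i) (g i) (fHT i) D c)) *
        (∏ c, discreteGaussian ((s i : ℝ) / (2 * ρT i))
          ((w i).2 c - stackedCount (T i) (g i) (fT i) D c)))) :
    ∀ (D D' : Multiset R), Multiset.card (D - D' + (D' - D)) = 1 →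
      ∀ α : ℝ, 1 < α →
        renyiDiv α (M D) (M D') ≤ (((∑ i : Fin ω, (ρHT i + ρT i)) * α : ℝ) : EReal) :=
  safetabH_zCDP_general ω T g s hs fHT fT ρHT ρT hρHT hρT M hM
end
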